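/- Let Z be an abelian group, let B ⊆ Z be finite and nonempty, and let G₁ ⊆ B × B be nonempty. Then there exist a set G ⊆ G₁ and a real number λ ≥ |G₁| / (2|−(G₁)|) such that: (i) λ ≤ |B[x]| ≤ 2λ for every x ∈ −(G); (ii) |G| ≥ |G₁| / (2 (1 + log₂(2|B| · |−(G₁)| / |G₁|))); (iii) |−(G)| ≥ |G| / (2λ); and (iv) E(B) ≥ λ |G| / (2 |B|³). -/

import Mathlib

open Finset Pointwise

/-- The additive energy `E(B) = |B|⁻³ · |{(b₁,b₂,b₃,b₄) ∈ B⁴ : b₁ − b₂ = b₃ − b₄}|`. -/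
noncomputable def energy {Z : Type*} [AddCommGroup Z] [DecidableEq Z] (A : Finset Z) : ℝ :=
  (((A ×ˢ A ×ˢ A ×ˢ A).filter
      (fun x => x.1 - x.2.1 = x.2.2.1 - x.2.2.2)).card : ℝ) / (A.card : ℝ) ^ 3

/-- `B[t] = (B + t) ∩ B`. -/
def shiftInter {Z : Type*} [AddCommGroup Z] [DecidableEq Z] (B : Finset Z) (t : Z) : Finset Z :=
  (B.image (fun b => b + t)) ∩ B

/-! Pairs of `G₁` with difference `x` inject into `B[x]` through their first coordinate, so
the pairs with `|B[x]| < λ₀ = |G₁| / (2|−(G₁)|)` number at most `|−(G₁)| λ₀ = |G₁| / 2`.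
The other pairs have `|B[x]| ∈ [λ₀, |B|]`; of the `1 + log₂ (|B| / λ₀)` dyadic ranges `[λ, 2λ]`
covering these values, the most popular one gives `G`. Then (iii) is the same fibre count, and
(iv) holds because each `x` contributes the `|B[x]|² ≥ λ |B[x]|` solutions
`a - (a - x) = c - (c - x)`, `a, c ∈ B[x]`, to the energy. -/

namespace Real

lemma two_pow_floor_logb_le_and_lt {x : ℝ} (hx : 1 ≤ x) :
    (2 : ℝ) ^ ⌊logb 2 x⌋₊ ≤ x ∧ x < 2 ^ (⌊logb 2 x⌋₊ + 1) := by
  have hx₀ : 0 < x := one_pos.trans_le hx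
  have hlog : 0 ≤ logb 2 x := logb_nonneg one_lt_two hx
  constructor
  · rw [← rpow_natCast, ← le_logb_iff_rpow_le one_lt_two hx₀]
    exact Nat.floor_le hlog
  · rw [← Nat.cast_ofNat, ← rpow_natCast, ← logb_lt_iff_lt_rpow (by norm_num) hx₀]
    exact_mod_cast Nat.lt_floor_add_one _

end Real

open Real in
lemma Finset.exists_subset_dyadic_level {α : Type*} (S : Finset α) (f : α → ℝ) {a M : ℝ}
    (ha : 0 < a) (hf : ∀ p ∈ S, a ≤ f p ∧ f p ≤ M) :
    ∃ T ⊆ S, ∃ lam, a ≤ lam ∧ (∀ p ∈ T, lam ≤ f p ∧ f p ≤ 2 * lam) ∧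
      (#S : ℝ) ≤ (1 + logb 2 (M / a)) * #T := by
  obtain rfl | ⟨p₀, hp₀⟩ := S.eq_empty_or_nonempty
  · exact ⟨∅, subset_rfl, a, le_rfl, by simp, by simp⟩
  have hratio : ∀ p ∈ S, 1 ≤ f p / a := fun p hp => (one_le_div ha).2 (hf p hp).1
  have hMa : 1 ≤ M / a := (hratio p₀ hp₀).trans (by gcongr; exact (hf p₀ hp₀).2)
  set level : α → ℕ := fun p => ⌊logb 2 (f p / a)⌋₊
  set J := ⌊logb 2 (M / a)⌋₊ + 1
  have hlevel : ∀ p ∈ S, level p ∈ range J := fun p hp => by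
    refine mem_range.2 (Nat.lt_succ_of_le (Nat.floor_le_floor ?_))
    exact logb_le_logb_of_le one_lt_two (by linarith [hratio p hp]) (by gcongr; exact (hf p hp).2)
  have hJ : (J : ℝ) ≤ 1 + logb 2 (M / a) := by
    have := Nat.floor_le (logb_nonneg one_lt_two hMa)
    push_cast [J]
    linarith
  have hJ₀ : (0 : ℝ) < J := by positivity
  obtain ⟨j, -, hj⟩ := exists_le_card_fiber_of_nsmul_le_card_of_maps_to hlevel
    nonempty_range_add_one (b := (#S : ℝ) / J) (by simp [mul_div_cancel₀ _ hJ₀.ne'])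
  refine ⟨{p ∈ S | level p = j}, filter_subset _ _, a * 2 ^ j,
    le_mul_of_one_le_right ha.le (one_le_pow₀ one_le_two), fun p hp => ?_, ?_⟩
  · obtain ⟨hpS, rfl⟩ := mem_filter.1 hp
    obtain ⟨hlow, hhigh⟩ := two_pow_floor_logb_le_and_lt (hratio p hpS)
    rw [le_div_iff₀' ha] at hlow
    rw [div_lt_iff₀' ha] at hhigh
    exact ⟨hlow, by rw [pow_succ] at hhigh; linarith⟩
  · calc (#S : ℝ) = J * (#S / J) := (mul_div_cancel₀ _ hJ₀.ne').symm
      _ ≤ (1 + logb 2 (M / a)) * #{p ∈ S | level p = j} := by gcongr; linarith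

section shiftInter

variable {Z : Type*} [AddCommGroup Z] [DecidableEq Z] {B : Finset Z}

lemma mem_shiftInter {x a : Z} : a ∈ shiftInter B x ↔ a ∈ B ∧ a - x ∈ B := by
  simp only [shiftInter, mem_inter, mem_image]
  constructor
  · rintro ⟨⟨b, hb, rfl⟩, hbx⟩
    exact ⟨hbx, by simpa using hb⟩
  · rintro ⟨ha, hax⟩
    exact ⟨⟨a - x, hax, sub_add_cancel a x⟩, ha⟩

lemma card_filter_sub_eq_le_card_shiftInter {S : Finset (Z × Z)} (hS : S ⊆ B ×ˢ B) (x : Z) :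
    #{p ∈ S | p.1 - p.2 = x} ≤ #(shiftInter B x) := by
  refine card_le_card_of_injOn Prod.fst (fun p hp => ?_) fun p hp q hq hpq => ?_
  · obtain ⟨hpS, rfl⟩ := mem_filter.1 hp
    obtain ⟨hp₁, hp₂⟩ := mem_product.1 (hS hpS)
    exact mem_shiftInter.2 ⟨hp₁, by simpa using hp₂⟩
  · obtain ⟨-, hp⟩ := mem_filter.1 hp
    obtain ⟨-, hq⟩ := mem_filter.1 hq
    refine Prod.ext hpq ?_
    rw [← sub_sub_cancel p.1 p.2, ← sub_sub_cancel q.1 q.2, hp, hq, hpq]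

lemma card_le_card_image_sub_mul {S : Finset (Z × Z)} (hS : S ⊆ B ×ˢ B) {c : ℝ}
    (hc : ∀ x ∈ S.image (fun p => p.1 - p.2), (#(shiftInter B x) : ℝ) ≤ c) :
    (#S : ℝ) ≤ #(S.image (fun p => p.1 - p.2)) * c := by
  rw [card_eq_sum_card_image (fun p => p.1 - p.2) S, Nat.cast_sum, ← nsmul_eq_mul]
  refine sum_le_card_nsmul _ _ _ fun x hx => ?_
  exact (Nat.cast_le.2 (card_filter_sub_eq_le_card_shiftInter hS x)).trans (hc x hx)

lemma card_filter_card_shiftInter_lt_le {S : Finset (Z × Z)} (hS : S ⊆ B ×ˢ B) (c : ℝ)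
    (hc : 0 ≤ c) :
    (#{p ∈ S | (#(shiftInter B (p.1 - p.2)) : ℝ) < c} : ℝ) ≤
      #(S.image (fun p => p.1 - p.2)) * c := by
  refine (card_le_card_image_sub_mul (c := c) ((filter_subset _ _).trans hS) fun x hx => ?_).trans ?_
  · obtain ⟨p, hp, rfl⟩ := mem_image.1 hx
    exact (mem_filter.1 hp).2.le
  · gcongr
    apply filter_subset

lemma sum_sq_card_shiftInter_div_le_energy (B X : Finset Z) :
    (∑ x ∈ X, (#(shiftInter B x) : ℝ) ^ 2) / (#B : ℝ) ^ 3 ≤ energy B := by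
  unfold energy
  gcongr
  have hsigma : ∑ x ∈ X, #(shiftInter B x) ^ 2 =
      #(X.sigma fun x => shiftInter B x ×ˢ shiftInter B x) := by
    simp [card_sigma, card_product, sq]
  exact_mod_cast hsigma.le.trans <| card_le_card_of_injOn
    (fun s => (s.2.1, s.2.1 - s.1, s.2.2, s.2.2 - s.1)) (fun s hs => by
      obtain ⟨ha, hc⟩ := mem_product.1 (mem_sigma.1 hs).2
      obtain ⟨ha, hax⟩ := mem_shiftInter.1 ha
      obtain ⟨hc, hcx⟩ := mem_shiftInter.1 hc
      simp [ha, hax, hc, hcx])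
    (fun s _ t _ hst => by
      simp only [Prod.mk.injEq] at hst
      obtain ⟨h₁, h₂, h₃, -⟩ := hst
      rw [h₁, sub_right_inj] at h₂
      exact Sigma.ext h₂ (heq_of_eq (Prod.ext h₁ h₃)))

lemma card_le_two_mul_card_filter_le_card_shiftInter {S : Finset (Z × Z)} (hS : S ⊆ B ×ˢ B) :
    (#S : ℝ) ≤ 2 * #{p ∈ S | (#S : ℝ) / (2 * #(S.image fun p => p.1 - p.2)) ≤
      #(shiftInter B (p.1 - p.2))} := by
  obtain rfl | hS₀ := S.eq_empty_or_nonempty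
  · simp
  set lam₀ := (#S : ℝ) / (2 * #(S.image fun p => p.1 - p.2))
  have hD : (0 : ℝ) < #(S.image fun p => p.1 - p.2) := by exact_mod_cast (hS₀.image _).card_pos
  have hsplit : (#{p ∈ S | lam₀ ≤ #(shiftInter B (p.1 - p.2))} : ℝ) +
      #{p ∈ S | (#(shiftInter B (p.1 - p.2)) : ℝ) < lam₀} = #S := by
    have := card_filter_add_card_filter_not (s := S)
      fun p => lam₀ ≤ (#(shiftInter B (p.1 - p.2)) : ℝ)
    simp only [not_le] at this
    exact_mod_cast this
  have hBad := card_filter_card_shiftInter_lt_le hS lam₀ (by positivity)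
  have hDlam₀ : (#(S.image fun p => p.1 - p.2) : ℝ) * lam₀ = #S / 2 := by
    simp only [lam₀]; field_simp
  linarith

lemma mul_card_div_le_energy {S : Finset (Z × Z)} (hS : S ⊆ B ×ˢ B) {lam : ℝ}
    (hlam : ∀ x ∈ S.image (fun p => p.1 - p.2), lam ≤ #(shiftInter B x)) :
    lam * #S / (#B : ℝ) ^ 3 ≤ energy B := by
  refine le_trans ?_ (sum_sq_card_shiftInter_div_le_energy B (S.image fun p => p.1 - p.2))
  gcongr
  rw [card_eq_sum_card_image (fun p => p.1 - p.2) S, Nat.cast_sum, mul_sum]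
  gcongr with x hx
  rw [sq]
  exact mul_le_mul (hlam x hx) (by exact_mod_cast card_filter_sub_eq_le_card_shiftInter hS x)
    (Nat.cast_nonneg _) (Nat.cast_nonneg _)

end shiftInter

theorem statement13_general {Z : Type*} [AddCommGroup Z] [DecidableEq Z]
    (B : Finset Z) (G₁ : Finset (Z × Z)) (hG₁ : G₁.Nonempty)
    (hG₁B : G₁ ⊆ B ×ˢ B) :
    ∃ (G : Finset (Z × Z)) (lam : ℝ), G ⊆ G₁ ∧
      ((G₁.card : ℝ) / (2 * ((G₁.image (fun p => p.1 - p.2)).card : ℝ)) ≤ lam) ∧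
      (∀ x ∈ G.image (fun p => p.1 - p.2),
        lam ≤ ((shiftInter B x).card : ℝ) ∧ ((shiftInter B x).card : ℝ) ≤ 2 * lam) ∧
      (G₁.card : ℝ) / (2 * (1 + Real.logb 2
        (2 * (B.card : ℝ) * ((G₁.image (fun p => p.1 - p.2)).card : ℝ) / (G₁.card : ℝ))))
        ≤ (G.card : ℝ) ∧
      (G.card : ℝ) / (2 * lam) ≤ ((G.image (fun p => p.1 - p.2)).card : ℝ) ∧
      lam * (G.card : ℝ) / (2 * (B.card : ℝ) ^ 3) ≤ energy B := by
  set D := G₁.image (fun p => p.1 - p.2)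
  have hG₁pos : (0 : ℝ) < #G₁ := by exact_mod_cast hG₁.card_pos
  have hDpos : (0 : ℝ) < #D := by exact_mod_cast (hG₁.image _).card_pos
  set lam₀ := (#G₁ : ℝ) / (2 * #D)
  have hlam₀ : 0 < lam₀ := by positivity
  set Good := {p ∈ G₁ | lam₀ ≤ #(shiftInter B (p.1 - p.2))}
  have hGood : (#G₁ : ℝ) ≤ 2 * #Good := card_le_two_mul_card_filter_le_card_shiftInter hG₁B
  obtain ⟨G, hGGood, lam, hlam₀lam, hlevel, hcard⟩ :=
    Good.exists_subset_dyadic_level (fun p => (#(shiftInter B (p.1 - p.2)) : ℝ)) hlam₀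
      (M := #B) fun p hp => ⟨(mem_filter.1 hp).2, by exact_mod_cast card_le_card inter_subset_right⟩
  have hGG₁ : G ⊆ G₁ := hGGood.trans (filter_subset _ _)
  have hlam : 0 < lam := hlam₀.trans_le hlam₀lam
  have hlevel' : ∀ x ∈ G.image (fun p => p.1 - p.2),
      lam ≤ #(shiftInter B x) ∧ (#(shiftInter B x) : ℝ) ≤ 2 * lam := by
    intro x hx
    obtain ⟨p, hp, rfl⟩ := mem_image.1 hx
    exact hlevel p hp
  have hratio : (#B : ℝ) / lam₀ = 2 * #B * #D / #G₁ := by simp only [lam₀]; field_simp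
  rw [hratio] at hcard
  have hL : 0 < 1 + Real.logb 2 (2 * #B * #D / #G₁) :=
    pos_of_mul_pos_left (by linarith) (Nat.cast_nonneg #G)
  refine ⟨G, lam, hGG₁, hlam₀lam, hlevel', ?_, ?_, ?_⟩
  · rw [div_le_iff₀ (by positivity)]
    linarith
  · rw [div_le_iff₀ (by positivity)]
    exact card_le_card_image_sub_mul (hGG₁.trans hG₁B) fun x hx => (hlevel' x hx).2
  · calc lam * #G / (2 * (#B : ℝ) ^ 3) ≤ lam * #G / (#B : ℝ) ^ 3 := by
          rw [mul_comm 2, ← div_div]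
          exact div_le_self (by positivity) one_le_two
      _ ≤ energy B := mul_card_div_le_energy (hGG₁.trans hG₁B) fun x hx => (hlevel' x hx).1

/-- For nonempty `G₁ ⊆ B × B` there are `G ⊆ G₁` and `λ ≥ |G₁|/(2|−(G₁)|)` with
`λ ≤ |B[x]| ≤ 2λ` on `−(G)`, `|G| ≥ |G₁|/(2(1 + log₂(2|B||−(G₁)|/|G₁|)))`,
`|−(G)| ≥ |G|/(2λ)` and `E(B) ≥ λ|G|/(2|B|³)`. -/
theorem statement13 {Z : Type*} [AddCommGroup Z] [DecidableEq Z]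
    (B : Finset Z) (hB : B.Nonempty) (G₁ : Finset (Z × Z)) (hG₁ : G₁.Nonempty)
    (hG₁B : G₁ ⊆ B ×ˢ B) :
    ∃ (G : Finset (Z × Z)) (lam : ℝ), G ⊆ G₁ ∧
      ((G₁.card : ℝ) / (2 * ((G₁.image (fun p => p.1 - p.2)).card : ℝ)) ≤ lam) ∧
      (∀ x ∈ G.image (fun p => p.1 - p.2),
        lam ≤ ((shiftInter B x).card : ℝ) ∧ ((shiftInter B x).card : ℝ) ≤ 2 * lam) ∧
      (G₁.card : ℝ) / (2 * (1 + Real.logb 2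
        (2 * (B.card : ℝ) * ((G₁.image (fun p => p.1 - p.2)).card : ℝ) / (G₁.card : ℝ))))
        ≤ (G.card : ℝ) ∧
      (G.card : ℝ) / (2 * lam) ≤ ((G.image (fun p => p.1 - p.2)).card : ℝ) ∧
      lam * (G.card : ℝ) / (2 * (B.card : ℝ) ^ 3) ≤ energy B :=
  statement13_general B G₁ hG₁ hG₁B
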